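/- Suppose f_d is a Routh force with Routh potential β, and let F : U → E × E be a local flow of the forced discrete mechanical system on an open set U ⊆ E × E (F differentiable with FL⁻(F(x)) = FL⁺(x) for all x ∈ U). Define the 2-form ω̃⁺ on E × E by ω̃⁺(x₀,x₁)((u0,u1),(v0,v1)) := ω⁺(x₀,x₁)((u0,u1),(v0,v1)) − β(x₁)(u1,v1). Then F preserves ω̃⁺: for every x ∈ U and all U₁, V₁ ∈ E × E, ω̃⁺(F(x))( (fderiv ℝ F x)(U₁), (fderiv ℝ F x)(V₁) ) = ω̃⁺(x)(U₁,V₁). -/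

import Mathlib

open ContinuousLinearMap

variable {E : Type*} [NormedAddCommGroup E] [NormedSpace ℝ E] [FiniteDimensional ℝ E]

/-- Partial Fréchet derivative in the first variable. -/
noncomputable def D1 (L : E × E → ℝ) (x : E × E) : E →L[ℝ] ℝ :=
  fderiv ℝ (fun a => L (a, x.2)) x.1

/-- Partial Fréchet derivative in the second variable. -/
noncomputable def D2 (L : E × E → ℝ) (x : E × E) : E →L[ℝ] ℝ :=
  fderiv ℝ (fun b => L (x.1, b)) x.2

/-- The force 1-form `f_d` on `E × E`. -/
noncomputable def fd (fm fp : E × E → (E →L[ℝ] ℝ)) (x : E × E) : (E × E) →L[ℝ] ℝ :=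
  (fm x).comp (ContinuousLinearMap.fst ℝ E E) + (fp x).comp (ContinuousLinearMap.snd ℝ E E)

/-- The 1-form `θ⁺` on `E × E`. -/
noncomputable def thetaP (Ld : E × E → ℝ) (fp : E × E → (E →L[ℝ] ℝ)) (x : E × E) :
    (E × E) →L[ℝ] ℝ := (D2 Ld x + fp x).comp (ContinuousLinearMap.snd ℝ E E)

/-- The 1-form `θ⁻` on `E × E`. -/
noncomputable def thetaM (Ld : E × E → ℝ) (fm : E × E → (E →L[ℝ] ℝ)) (x : E × E) :
    (E × E) →L[ℝ] ℝ := -((D1 Ld x + fm x).comp (ContinuousLinearMap.fst ℝ E E))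

/-- The exterior derivative of a 1-form `α` on `E × E`, as a function of two vectors. -/
noncomputable def extd (α : E × E → ((E × E) →L[ℝ] ℝ)) (x : E × E) (U V : E × E) : ℝ :=
  fderiv ℝ α x U V - fderiv ℝ α x V U

/-- The 2-form `ω⁺ := -dθ⁺` on `E × E`. -/
noncomputable def omegaP (Ld : E × E → ℝ) (fp : E × E → (E →L[ℝ] ℝ)) (x : E × E)
    (U V : E × E) : ℝ := -extd (thetaP Ld fp) x U V

/-- The 2-form `ω⁻ := -dθ⁻` on `E × E`. -/
noncomputable def omegaM (Ld : E × E → ℝ) (fm : E × E → (E →L[ℝ] ℝ)) (x : E × E)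
    (U V : E × E) : ℝ := -extd (thetaM Ld fm) x U V

/-- The forced discrete Legendre transform `FL⁺`. -/
noncomputable def FLp (Ld : E × E → ℝ) (fp : E × E → (E →L[ℝ] ℝ)) (x : E × E) :
    E × (E →L[ℝ] ℝ) := (x.2, D2 Ld x + fp x)

/-- The forced discrete Legendre transform `FL⁻`. -/
noncomputable def FLm (Ld : E × E → ℝ) (fm : E × E → (E →L[ℝ] ℝ)) (x : E × E) :
    E × (E →L[ℝ] ℝ) := (x.1, -D1 Ld x - fm x)

set_option maxHeartbeats 2000000 in
/-- **The flow of a forced discrete mechanical system of Routh type preserves the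
modified 2-form `ω̃⁺(x)(U,V) := ω⁺(x)(U,V) − β(x₁)(u1,v1)`.** -/
theorem flow_preserves_omega_tilde_of_routh
    (Ld : E × E → ℝ) (fm fp : E × E → (E →L[ℝ] ℝ))
    (hLd : ContDiff ℝ (⊤ : ℕ∞) Ld) (hfm : ContDiff ℝ (⊤ : ℕ∞) fm) (hfp : ContDiff ℝ (⊤ : ℕ∞) fp)
    (β : E → (E →L[ℝ] E →L[ℝ] ℝ))
    (hβalt : ∀ (q : E) (u v : E), β q u v = -β q v u)
    (hRouth : ∀ (q0 q1 u0 u1 v0 v1 : E),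
      -extd (fd fm fp) (q0, q1) (u0, u1) (v0, v1) = β q1 u1 v1 - β q0 u0 v0)
    (S : Set (E × E)) (hS : IsOpen S) (F : (E × E) → (E × E))
    (hF : DifferentiableOn ℝ F S)
    (hflow : ∀ x ∈ S, FLm Ld fm (F x) = FLp Ld fp x) :
    ∀ x ∈ S, ∀ U₁ V₁ : E × E,
      (omegaP Ld fp (F x) (fderiv ℝ F x U₁) (fderiv ℝ F x V₁)
          - β (F x).2 (fderiv ℝ F x U₁).2 (fderiv ℝ F x V₁).2)
        = omegaP Ld fp x U₁ V₁ - β x.2 U₁.2 V₁.2 := by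
  intro x hx U₁ V₁
  have hLdd : Differentiable ℝ Ld := hLd.differentiable (by simp)
  set g : (E × E) → (E × E) →L[ℝ] ℝ := fderiv ℝ Ld with hgdef
  have hgsm : ContDiff ℝ (⊤ : ℕ∞) g := hLd.fderiv_right (by simp)
  have hgd : Differentiable ℝ g := hgsm.differentiable (by simp)
  -- partial derivatives via full derivative
  have hD1 : ∀ y : E × E, D1 Ld y = (g y).comp (ContinuousLinearMap.inl ℝ E E) := by
    intro y
    have h1 : HasFDerivAt (fun a : E => (a, y.2)) (ContinuousLinearMap.inl ℝ E E) y.1 :=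
      hasFDerivAt_prodMk_left y.1 y.2
    have h2 := ((hLdd (y.1, y.2)).hasFDerivAt.comp y.1 h1).fderiv
    simpa [D1, Function.comp_def, hgdef] using h2
  have hD2 : ∀ y : E × E, D2 Ld y = (g y).comp (ContinuousLinearMap.inr ℝ E E) := by
    intro y
    have h1 : HasFDerivAt (fun b : E => (y.1, b)) (ContinuousLinearMap.inr ℝ E E) y.2 :=
      hasFDerivAt_prodMk_right y.1 y.2
    have h2 := ((hLdd (y.1, y.2)).hasFDerivAt.comp y.2 h1).fderiv
    simpa [D2, Function.comp_def, hgdef] using h2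
  -- the momentum maps
  set n : (E × E) → E →L[ℝ] ℝ := fun y => D2 Ld y + fp y with hndef
  set m : (E × E) → E →L[ℝ] ℝ := fun y => D1 Ld y + fm y with hmdef
  set Ψl : ((E × E) →L[ℝ] ℝ) →L[ℝ] (E →L[ℝ] ℝ) :=
    (ContinuousLinearMap.compL ℝ E (E × E) ℝ).flip (ContinuousLinearMap.inl ℝ E E) with hΨl
  set Ψr : ((E × E) →L[ℝ] ℝ) →L[ℝ] (E →L[ℝ] ℝ) :=
    (ContinuousLinearMap.compL ℝ E (E × E) ℝ).flip (ContinuousLinearMap.inr ℝ E E) with hΨr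
  have hnd : Differentiable ℝ n := by
    have : n = fun y => Ψr (g y) + fp y := by
      funext y; simp [hndef, hΨr, hD2 y]
    rw [this]
    exact (Ψr.differentiable.comp hgd).add (hfp.differentiable (by simp))
  have hmd : Differentiable ℝ m := by
    have : m = fun y => Ψl (g y) + fm y := by
      funext y; simp [hmdef, hΨl, hD1 y]
    rw [this]
    exact (Ψl.differentiable.comp hgd).add (hfm.differentiable (by simp))
  -- precomposition operators with fst/snd
  set Φf : (E →L[ℝ] ℝ) →L[ℝ] ((E × E) →L[ℝ] ℝ) :=
    (ContinuousLinearMap.compL ℝ (E × E) E ℝ).flip (ContinuousLinearMap.fst ℝ E E) with hΦf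
  set Φs : (E →L[ℝ] ℝ) →L[ℝ] ((E × E) →L[ℝ] ℝ) :=
    (ContinuousLinearMap.compL ℝ (E × E) E ℝ).flip (ContinuousLinearMap.snd ℝ E E) with hΦs
  have hθP : thetaP Ld fp = fun y => Φs (n y) := by
    funext y; simp [thetaP, hΦs, hndef]
  have hθM : thetaM Ld fm = fun y => -Φf (m y) := by
    funext y; simp [thetaM, hΦf, hmdef]
  have hθPd : ∀ y, HasFDerivAt (thetaP Ld fp) (Φs.comp (fderiv ℝ n y)) y := by
    intro y
    rw [hθP]
    exact Φs.hasFDerivAt.comp y (hnd y).hasFDerivAt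
  have hθMd : ∀ y, HasFDerivAt (thetaM Ld fm) ((-Φf).comp (fderiv ℝ m y)) y := by
    intro y
    rw [hθM]
    have := (-Φf).hasFDerivAt.comp y (hmd y).hasFDerivAt
    simpa [Function.comp_def] using this
  have hfP : ∀ y (U V : E × E),
      fderiv ℝ (thetaP Ld fp) y U V = fderiv ℝ n y U V.2 := by
    intro y U V
    rw [(hθPd y).fderiv]
    simp [hΦs]
  have hfM : ∀ y (U V : E × E),
      fderiv ℝ (thetaM Ld fm) y U V = -(fderiv ℝ m y U V.1) := by
    intro y U V
    rw [(hθMd y).fderiv]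
    simp [hΦf]
  -- fd differentiable
  have hfdd : Differentiable ℝ (fd fm fp) := by
    have : fd fm fp = fun y => Φf (fm y) + Φs (fp y) := by
      funext y; simp [fd, hΦf, hΦs]
    rw [this]
    exact ((Φf.differentiable.comp (hfm.differentiable (by simp)))).add
      (Φs.differentiable.comp (hfp.differentiable (by simp)))
  -- θ⁺ = θ⁻ + dL + fd
  have hθsum : thetaP Ld fp = fun y => thetaM Ld fm y + (g y + fd fm fp y) := by
    funext y
    refine ContinuousLinearMap.ext fun v => ?_
    have hv : g y v = g y (v.1, 0) + g y (0, v.2) := by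
      rw [← map_add]
      congr 1
      simp
    simp only [thetaP, thetaM, fd, ContinuousLinearMap.add_apply,
      ContinuousLinearMap.coe_comp', Function.comp_apply, ContinuousLinearMap.neg_apply,
      ContinuousLinearMap.coe_fst', ContinuousLinearMap.coe_snd', hD1 y, hD2 y,
      ContinuousLinearMap.inl_apply, ContinuousLinearMap.inr_apply, hv]
    ring
  have hsplit : ∀ y, fderiv ℝ (thetaP Ld fp) y
      = fderiv ℝ (thetaM Ld fm) y + (fderiv ℝ g y + fderiv ℝ (fd fm fp) y) := by
    intro y
    rw [hθsum, fderiv_fun_add (g := fun z => g z + fd fm fp z) ((hθMd y).differentiableAt) ((hgd y).add (hfdd y)),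
      fderiv_fun_add (hgd y) (hfdd y)]
  -- relation omegaP = omegaM - extd fd
  have key3 : ∀ y (A B : E × E),
      omegaP Ld fp y A B = omegaM Ld fm y A B - extd (fd fm fp) y A B := by
    intro y A B
    have hsym : ∀ v w, fderiv ℝ g y v w = fderiv ℝ g y w v :=
      second_derivative_symmetric (fun z => (hLdd z).hasFDerivAt) ((hgd y).hasFDerivAt)
    simp only [omegaP, omegaM, extd, hsplit y, ContinuousLinearMap.add_apply]
    have := hsym A B
    ring_nf
    linarith [hsym A B]
  -- flow facts
  have hxd : DifferentiableAt ℝ F x := hF.differentiableAt (hS.mem_nhds hx)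
  have hev1 : (fun y => (F y).1) =ᶠ[nhds x] (fun y : E × E => y.2) := by
    filter_upwards [hS.mem_nhds hx] with y hy
    exact congrArg Prod.fst (hflow y hy)
  have hF1 : (ContinuousLinearMap.fst ℝ E E).comp (fderiv ℝ F x)
      = ContinuousLinearMap.snd ℝ E E := by
    have h1 : fderiv ℝ (fun y => (F y).1) x
        = (ContinuousLinearMap.fst ℝ E E).comp (fderiv ℝ F x) :=
      (hxd.hasFDerivAt.fst).fderiv
    have h2 : fderiv ℝ (fun y => (F y).1) x = ContinuousLinearMap.snd ℝ E E := by
      rw [hev1.fderiv_eq]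
      exact fderiv_snd
    rw [← h1, h2]
  have hA1 : ∀ W : E × E, (fderiv ℝ F x W).1 = W.2 := by
    intro W
    have := congrFun (congrArg (DFunLike.coe) hF1) W
    simpa using this
  have hFx1 : (F x).1 = x.2 := congrArg Prod.fst (hflow x hx)
  -- momentum matching : m ∘ F = -n on S
  have hmF : ∀ y ∈ S, m (F y) = -(n y) := by
    intro y hy
    have h2 := congrArg Prod.snd (hflow y hy)
    simp only [FLm, FLp] at h2
    simp only [hmdef, hndef, ← h2]
    abel
  have hchain : (fderiv ℝ m (F x)).comp (fderiv ℝ F x) = -(fderiv ℝ n x) := by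
    have h1 : fderiv ℝ (m ∘ F) x = (fderiv ℝ m (F x)).comp (fderiv ℝ F x) :=
      fderiv_comp x (hmd (F x)) hxd
    have hev2 : (m ∘ F) =ᶠ[nhds x] (fun y => -(n y)) := by
      filter_upwards [hS.mem_nhds hx] with y hy
      exact hmF y hy
    have h2 : fderiv ℝ (m ∘ F) x = -(fderiv ℝ n x) := by
      rw [hev2.fderiv_eq, fderiv_fun_neg]
    rw [← h1, h2]
  have hchain' : ∀ W : E × E, fderiv ℝ m (F x) (fderiv ℝ F x W) = -(fderiv ℝ n x W) := by
    intro W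
    have := congrFun (congrArg (DFunLike.coe) hchain) W
    simpa using this
  -- assemble
  set A := fderiv ℝ F x U₁ with hA
  set B := fderiv ℝ F x V₁ with hB
  have hRouthFx : -extd (fd fm fp) (F x) A B = β (F x).2 A.2 B.2 - β (F x).1 A.1 B.1 := by
    have := hRouth (F x).1 (F x).2 A.1 A.2 B.1 B.2
    simpa using this
  have homegaM : omegaM Ld fm (F x) A B = omegaP Ld fp x U₁ V₁ := by
    simp only [omegaM, omegaP, extd, hfM, hfP, hA, hB, hchain', hA1,
      ContinuousLinearMap.neg_apply]
    ring
  calc omegaP Ld fp (F x) A B - β (F x).2 A.2 B.2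
      = omegaM Ld fm (F x) A B + (-extd (fd fm fp) (F x) A B) - β (F x).2 A.2 B.2 := by
        rw [key3]; ring
    _ = omegaM Ld fm (F x) A B - β (F x).1 A.1 B.1 := by rw [hRouthFx]; ring
    _ = omegaP Ld fp x U₁ V₁ - β x.2 U₁.2 V₁.2 := by
        rw [homegaM, hFx1, hA, hB, hA1 U₁, hA1 V₁]
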